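/- With the setup of a spanning tree T_f of the L-by-T grid accessible from row one, an arc a = (u,v) of T_f splitting it into T_{f,1} and T_{f,2}, call a vertex w of type 2A if w ∈ T_{f,2} and the directed tree path P from row one to w contains arc a. Then for each row l, if v_{l,i} and v_{l,j} are of type 2A with i < j, every v_{l,k} with i < k < j is also of type 2A. -/

import Mathlib

/-- Arcs of the `L`-by-`T` grid (0-indexed): `(true,l,t)` is the downward arc
`(l,t)→(l+1,t)` and `(false,l,t)` is the forward arc `(l,t)→(l,t+1)`. -/
abbrev GArc := Bool × ℕ × ℕ

def gTail (a : GArc) : ℕ × ℕ := (a.2.1, a.2.2)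

def gHead (a : GArc) : ℕ × ℕ := if a.1 then (a.2.1 + 1, a.2.2) else (a.2.1, a.2.2 + 1)

def ValidArc (L T : ℕ) (a : GArc) : Prop :=
  if a.1 then a.2.1 + 1 < L ∧ a.2.2 < T else a.2.1 < L ∧ a.2.2 + 1 < T

/-- The arc set `S` contains an undirected cycle. -/
def HasUndirCycle {V A : Type*} (tail head : A → V) (S : Set A) : Prop :=
  ∃ (k : ℕ) (arcs : Fin k → A) (vs : Fin (k + 1) → V),
    1 ≤ k ∧ Function.Injective arcs ∧
    Function.Injective (fun i : Fin k => vs i.castSucc) ∧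
    vs (Fin.last k) = vs 0 ∧
    ∀ i : Fin k, arcs i ∈ S ∧
      ((tail (arcs i) = vs i.castSucc ∧ head (arcs i) = vs i.succ) ∨
        (head (arcs i) = vs i.castSucc ∧ tail (arcs i) = vs i.succ))

/-- One undirected step along an arc of `S`. -/
def undirStep (S : Set GArc) (v w : ℕ × ℕ) : Prop :=
  ∃ a ∈ S, (gTail a = v ∧ gHead a = w) ∨ (gTail a = w ∧ gHead a = v)

/-- One directed step along an arc of `S`. -/
def dirStep (S : Set GArc) (v w : ℕ × ℕ) : Prop :=
  ∃ a ∈ S, gTail a = v ∧ gHead a = w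

/-- `S` is a spanning tree of the `L`-by-`T` grid: all its arcs are grid arcs, any two
grid vertices are joined by an undirected path in `S`, and `S` has no undirected cycle. -/
def IsGridSpanningTree (L T : ℕ) (S : Set GArc) : Prop :=
  (∀ a ∈ S, ValidArc L T a) ∧
    (∀ v w : ℕ × ℕ, v.1 < L → v.2 < T → w.1 < L → w.2 < T →
      Relation.ReflTransGen (undirStep S) v w) ∧
    ¬ HasUndirCycle gTail gHead S

/-- Every grid vertex is accessible from row one via a directed path in `S`. -/
def Accessible (L T : ℕ) (S : Set GArc) : Prop :=
  ∀ l t, l < L → t < T → ∃ j < T, Relation.ReflTransGen (dirStep S) (0, j) (l, t)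

/-- The set of row-one columns `j` from which `(l,i)` is reachable by a directed path
in `S`; `κ_l(i)` is its least element. -/
def kappaSet (T' : ℕ) (S : Set GArc) (l i : ℕ) : Set ℕ :=
  {j | j < T' ∧ Relation.ReflTransGen (dirStep S) ((0, j) : ℕ × ℕ) (l, i)}

/-- Vertex `(l,i)` is of type 2A (w.r.t. the spanning tree `S` and removed tree arc `a₀`):
it lies in the component of the head of `a₀` after deleting `a₀`, and the directed tree
path from row one (starting at `v_{1,κ_l(i)}`) to `(l,i)` contains the arc `a₀`. -/
def Type2A (T' : ℕ) (S : Set GArc) (a₀ : GArc) (l i : ℕ) : Prop :=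
  Relation.ReflTransGen (undirStep (S \ {a₀})) (gHead a₀) (l, i) ∧
    ∃ (κ n : ℕ) (p : ℕ → ℕ × ℕ), IsLeast (kappaSet T' S l i) κ ∧
      p 0 = (0, κ) ∧ p n = (l, i) ∧ (∀ s < n, dirStep S (p s) (p (s + 1))) ∧
      ∃ s < n, gTail a₀ = p s ∧ gHead a₀ = p (s + 1)

/-! Every grid arc raises `l + t` by one, so directed paths are monotone lattice paths that cross
the antidiagonals one at a time, and two of them cannot cross without sharing a vertex. A path
from row one to `v_{l,k}` ends between the two paths from the head of `a` to `v_{l,i}` and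
`v_{l,j}`, hence meets one of them in a vertex `w` reached after `a`. Row-one paths through a
common vertex start at the same column `κ`, so the path through `a` to `w`, continued to
`v_{l,k}`, starts at `v_{1,κ_l(k)}`. Membership in `T_{f,2}` is automatic: after the head of `a`
a directed path never returns to the antidiagonal of its tail. -/

open Relation Function

section Chains

variable {α : Type*} {R : α → α → Prop}

lemma reflTransGen_of_chain {n : ℕ} {p : ℕ → α} (hp : ∀ s < n, R (p s) (p (s + 1)))
    {a b : ℕ} (hab : a ≤ b) (hbn : b ≤ n) : ReflTransGen R (p a) (p b) :=
  (reflTransGen_of_succ_of_le (fun s t => R (p s) (p t))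
    (fun s hs => by simpa using hp s (by grind)) hab).lift p fun _ _ h => h

lemma chain_update {n : ℕ} {p : ℕ → α} (hp : ∀ s < n, R (p s) (p (s + 1))) {c : α}
    (hc : R (p n) c) :
    ∀ s < n + 1, R (update p (n + 1) c s) (update p (n + 1) c (s + 1)) := by
  intro s hs
  rw [update_of_ne (by omega)]
  rcases Nat.lt_succ_iff_lt_or_eq.mp hs with hs | rfl
  · rw [update_of_ne (by omega)]
    exact hp s hs
  · rwa [update_self]

lemma exists_chain_of_reflTransGen {x y : α} (h : ReflTransGen R x y) :
    ∃ (n : ℕ) (p : ℕ → α), p 0 = x ∧ p n = y ∧ ∀ s < n, R (p s) (p (s + 1)) := by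
  induction h with
  | refl => exact ⟨0, fun _ => x, rfl, rfl, by simp⟩
  | tail _ hbc ih =>
    obtain ⟨n, p, hp0, hpn, hp⟩ := ih
    exact ⟨n + 1, update p (n + 1) _, by simp [hp0], by simp, chain_update hp (hpn ▸ hbc)⟩

lemma exists_chain_through {x y z w : α} (hxy : ReflTransGen R x y) (hyz : R y z)
    (hzw : ReflTransGen R z w) :
    ∃ (n : ℕ) (p : ℕ → α), p 0 = x ∧ p n = w ∧ (∀ s < n, R (p s) (p (s + 1))) ∧
      ∃ s < n, p s = y ∧ p (s + 1) = z := by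
  induction hzw with
  | refl =>
    obtain ⟨n, p, hp0, hpn, hp⟩ := exists_chain_of_reflTransGen hxy
    refine ⟨n + 1, update p (n + 1) z, by simp [hp0], by simp, chain_update hp (hpn ▸ hyz),
      n, by omega, ?_, by simp⟩
    rwa [update_of_ne (by omega)]
  | tail _ hbc ih =>
    obtain ⟨n, p, hp0, hpn, hp, s, hs, hps, hps'⟩ := ih
    refine ⟨n + 1, update p (n + 1) _, by simp [hp0], by simp, chain_update hp (hpn ▸ hbc),
      s, by omega, ?_, ?_⟩ <;> rwa [update_of_ne (by omega)]

end Chains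

section Grid

variable {S : Set GArc}

lemma gHead_eq (a : GArc) :
    gHead a = ((gTail a).1 + 1, (gTail a).2) ∨ gHead a = ((gTail a).1, (gTail a).2 + 1) := by
  rcases a with ⟨_ | _, x, y⟩ <;> simp [gHead, gTail]

lemma gHead_diag (a : GArc) : (gHead a).1 + (gHead a).2 = (gTail a).1 + (gTail a).2 + 1 := by
  rcases gHead_eq a with h | h <;> rw [h] <;> omega

lemma dirStep.le {v w : ℕ × ℕ} (h : dirStep S v w) : v ≤ w := by
  obtain ⟨a, -, rfl, rfl⟩ := h
  rcases gHead_eq a with h | h <;> rw [h, Prod.le_def] <;> omega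

lemma dirStep.diag {v w : ℕ × ℕ} (h : dirStep S v w) : w.1 + w.2 = v.1 + v.2 + 1 := by
  obtain ⟨a, -, rfl, rfl⟩ := h
  exact gHead_diag a

lemma le_of_reflTransGen_dirStep {v w : ℕ × ℕ} (h : ReflTransGen (dirStep S) v w) : v ≤ w := by
  induction h with
  | refl => exact le_rfl
  | tail _ hbc ih => exact ih.trans hbc.le

lemma exists_diag_eq_of_reflTransGen_dirStep {v w : ℕ × ℕ}
    (h : ReflTransGen (dirStep S) v w) {d : ℕ} (hvd : v.1 + v.2 ≤ d) (hdw : d ≤ w.1 + w.2) :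
    ∃ z : ℕ × ℕ, z.1 + z.2 = d ∧ ReflTransGen (dirStep S) v z ∧ ReflTransGen (dirStep S) z w := by
  induction h with
  | refl => exact ⟨v, by omega, .refl, .refl⟩
  | @tail b c hvb hbc ih =>
    by_cases hd : d = c.1 + c.2
    · exact ⟨c, hd.symm, hvb.tail hbc, .refl⟩
    · obtain ⟨z, hz, hvz, hzb⟩ := ih (by have := hbc.diag; omega)
      exact ⟨z, hz, hvz, hzb.tail hbc⟩

/-- A discrete intermediate value theorem: both paths advance one antidiagonal per step, and the
column gap can shrink by at most one per step, so it cannot skip past zero. -/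
lemma exists_meet_of_col_le {l j k : ℕ} {y z : ℕ × ℕ} (hz : ReflTransGen (dirStep S) z (l, k))
    (hy : ReflTransGen (dirStep S) y (l, j)) (hdiag : y.1 + y.2 = z.1 + z.2) (hcol : y.2 ≤ z.2)
    (hkj : k ≤ j) :
    ∃ w, ReflTransGen (dirStep S) y w ∧ ReflTransGen (dirStep S) z w ∧
      ReflTransGen (dirStep S) w (l, j) ∧ ReflTransGen (dirStep S) w (l, k) := by
  induction hz using ReflTransGen.head_induction_on generalizing y with
  | refl =>
    have hyl := Prod.le_def.mp (le_of_reflTransGen_dirStep hy)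
    obtain rfl : y = (l, k) := Prod.ext (by simp only at *; omega) (by simp only at *; omega)
    exact ⟨(l, k), .refl, .refl, hy, .refl⟩
  | @head z z' hzz' hz'k ih =>
    by_cases hyz : y = z
    · subst hyz
      exact ⟨y, .refl, .refl, hy, .head hzz' hz'k⟩
    have hcol' : y.2 < z.2 := lt_of_le_of_ne hcol fun h => hyz (Prod.ext (by omega) h)
    rcases hy.cases_head with rfl | ⟨y', hyy', hy'j⟩
    · have := Prod.le_def.mp (hzz'.le.trans (le_of_reflTransGen_dirStep hz'k))
      simp only at hdiag this
      omega
    · have hyy'_le := Prod.le_def.mp hyy'.le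
      have hzz'_le := Prod.le_def.mp hzz'.le
      have := hyy'.diag
      have := hzz'.diag
      obtain ⟨w, hy'w, hz'w, hwj, hwk⟩ := ih hy'j (by omega) (by omega)
      exact ⟨w, hy'w.head hyy', hz'w.head hzz', hwj, hwk⟩

lemma exists_meet_of_between {h : ℕ × ℕ} {l i j k m : ℕ}
    (hi : ReflTransGen (dirStep S) h (l, i)) (hj : ReflTransGen (dirStep S) h (l, j))
    (hk : ReflTransGen (dirStep S) (0, m) (l, k)) (hik : i ≤ k) (hkj : k ≤ j) :
    ∃ w, ReflTransGen (dirStep S) (0, m) w ∧ ReflTransGen (dirStep S) w (l, k) ∧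
      ReflTransGen (dirStep S) h w ∧
      (ReflTransGen (dirStep S) w (l, i) ∨ ReflTransGen (dirStep S) w (l, j)) := by
  have hhi := Prod.le_def.mp (le_of_reflTransGen_dirStep hi)
  have hmk := Prod.le_def.mp (le_of_reflTransGen_dirStep hk)
  simp only at hhi hmk
  rcases le_total m (h.1 + h.2) with hmh | hhm
  · obtain ⟨z, hz, hmz, hzk⟩ :=
      exists_diag_eq_of_reflTransGen_dirStep hk (by simpa using hmh) (by dsimp only; omega)
    rcases le_total z.2 h.2 with hzh | hhz
    · obtain ⟨w, hzw, hhw, hwk, hwi⟩ := exists_meet_of_col_le hi hzk hz hzh hik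
      exact ⟨w, hmz.trans hzw, hwk, hhw, .inl hwi⟩
    · obtain ⟨w, hhw, hzw, hwj, hwk⟩ := exists_meet_of_col_le hzk hj hz.symm hhz hkj
      exact ⟨w, hmz.trans hzw, hwk, hhw, .inr hwj⟩
  · obtain ⟨y, hy, hhy, hyj⟩ :=
      exists_diag_eq_of_reflTransGen_dirStep hj hhm (by dsimp only; omega)
    obtain ⟨w, hyw, hmw, hwj, hwk⟩ :=
      exists_meet_of_col_le hk hyj (by simpa using hy) (by dsimp only; omega) hkj
    exact ⟨w, hmw, hwk, hhy.trans hyw, .inr hwj⟩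

end Grid

section Type2A

variable {T : ℕ} {S : Set GArc} {a₀ : GArc}

lemma reflTransGen_undirStep_diff_of_gHead {w : ℕ × ℕ}
    (h : ReflTransGen (dirStep S) (gHead a₀) w) :
    ReflTransGen (undirStep (S \ {a₀})) (gHead a₀) w := by
  induction h with
  | refl => exact .refl
  | @tail b c hb hbc ih =>
    obtain ⟨a, ha, rfl, rfl⟩ := hbc
    -- `a₀` itself cannot occur after its head: it would lead one antidiagonal back.
    have hne : a ≠ a₀ := by
      rintro rfl
      have := Prod.le_def.mp (le_of_reflTransGen_dirStep hb)
      have := gHead_diag a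
      omega
    exact ih.tail ⟨a, ⟨ha, hne⟩, .inl ⟨rfl, rfl⟩⟩

theorem type2A_iff {l i : ℕ} :
    Type2A T S a₀ l i ↔ ∃ κ, IsLeast (kappaSet T S l i) κ ∧
      ReflTransGen (dirStep S) (0, κ) (gTail a₀) ∧ dirStep S (gTail a₀) (gHead a₀) ∧
      ReflTransGen (dirStep S) (gHead a₀) (l, i) := by
  constructor
  · rintro ⟨-, κ, n, p, hκ, hp0, hpn, hp, s, hs, hts, hhs⟩
    refine ⟨κ, hκ, ?_, hts ▸ hhs ▸ hp s hs, ?_⟩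
    · simpa [hp0, hts] using reflTransGen_of_chain hp (Nat.zero_le s) hs.le
    · simpa [hpn, hhs] using reflTransGen_of_chain hp hs le_rfl
  · rintro ⟨κ, hκ, hκt, hth, hhi⟩
    obtain ⟨n, p, hp0, hpn, hp, s, hs, hps, hps'⟩ := exists_chain_through hκt hth hhi
    exact ⟨reflTransGen_undirStep_diff_of_gHead hhi, κ, n, p, hκ, hp0, hpn, hp, s, hs,
      hps.symm, hps'.symm⟩

lemma kappa_eq_of_reach_common {l i l' k c m : ℕ} {w : ℕ × ℕ}
    (hc : IsLeast (kappaSet T S l i) c) (hm : IsLeast (kappaSet T S l' k) m)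
    (hcw : ReflTransGen (dirStep S) (0, c) w) (hmw : ReflTransGen (dirStep S) (0, m) w)
    (hwi : ReflTransGen (dirStep S) w (l, i)) (hwk : ReflTransGen (dirStep S) w (l', k)) :
    c = m :=
  le_antisymm (hc.2 ⟨hm.1.1, hmw.trans hwi⟩) (hm.2 ⟨hc.1.1, hcw.trans hwk⟩)

lemma type2A_of_reach_common {l i l' k c m : ℕ} {w : ℕ × ℕ}
    (hc : IsLeast (kappaSet T S l i) c) (hct : ReflTransGen (dirStep S) (0, c) (gTail a₀))
    (hth : dirStep S (gTail a₀) (gHead a₀)) (hhw : ReflTransGen (dirStep S) (gHead a₀) w)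
    (hwi : ReflTransGen (dirStep S) w (l, i)) (hm : IsLeast (kappaSet T S l' k) m)
    (hmw : ReflTransGen (dirStep S) (0, m) w) (hwk : ReflTransGen (dirStep S) w (l', k)) :
    Type2A T S a₀ l' k := by
  obtain rfl := kappa_eq_of_reach_common hc hm ((hct.tail hth).trans hhw) hmw hwi hwk
  exact type2A_iff.mpr ⟨c, hm, hct, hth, hhw.trans hwk⟩

end Type2A

theorem type2A_interval_general (L T : ℕ) (S : Set GArc)
    (hacc : Accessible L T S)
    (a₀ : GArc)
    (l i k j : ℕ) (hl : l < L) (hik : i < k) (hkj : k < j) (hj : j < T)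
    (hi2A : Type2A T S a₀ l i) (hj2A : Type2A T S a₀ l j) :
    Type2A T S a₀ l k := by
  obtain ⟨c, hc, hct, hth, hhi⟩ := type2A_iff.mp hi2A
  obtain ⟨c', hc', hc't, -, hhj⟩ := type2A_iff.mp hj2A
  obtain ⟨m, hm⟩ : ∃ m, IsLeast (kappaSet T S l k) m := by
    obtain ⟨m, hmT, hmk⟩ := hacc l k hl (hkj.trans hj)
    exact ⟨_, isLeast_csInf ⟨m, hmT, hmk⟩⟩
  obtain ⟨w, hmw, hwk, hhw, hwi | hwj⟩ := exists_meet_of_between hhi hhj hm.1.2 hik.le hkj.le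
  · exact type2A_of_reach_common hc hct hth hhw hwi hm hmw hwk
  · exact type2A_of_reach_common hc' hc't hth hhw hwj hm hmw hwk

/-- In each row, the type 2A vertices form an interval: if `v_{l,i}` and `v_{l,j}` are of
type 2A with `i < j`, then so is every `v_{l,k}` with `i < k < j`. -/
theorem type2A_interval (L T : ℕ) (S : Set GArc)
    (htree : IsGridSpanningTree L T S) (hacc : Accessible L T S)
    (a₀ : GArc) (ha₀ : a₀ ∈ S)
    (l i k j : ℕ) (hl : l < L) (hik : i < k) (hkj : k < j) (hj : j < T)
    (hi2A : Type2A T S a₀ l i) (hj2A : Type2A T S a₀ l j) :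
    Type2A T S a₀ l k :=
  type2A_interval_general L T S hacc a₀ l i k j hl hik hkj hj hi2A hj2A
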